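/- arXiv:1609.07834 — 11 statements merged into one kernel-verified Lean document; each statement's English description precedes it below -/
import Mathlib

section
/- Suppose the selection probabilities follow a logistic model without interaction: p_{de} = expit(β₀ + β₁ d + β₂ e) for d,e ∈ {0,1}, where expit(x) = 1/(1+e^{-x}). If β₁ and β₂ have the same sign (β₁ β₂ ≥ 0), then p_{11} p_{00} ≤ p_{10} p_{01}, i.e., Inter_RR ≤ 1. -/
noncomputable def expit (x : ℝ) : ℝ := 1 / (1 + Real.exp (-x))

/-- logistic no-interaction model with β₁β₂ ≥ 0 implies Inter_RR ≤ 1. -/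
theorem stmt_3 (β₀ β₁ β₂ : ℝ) (h : β₁ * β₂ ≥ 0) :
    expit (β₀ + β₁ + β₂) * expit β₀ ≤ expit (β₀ + β₁) * expit (β₀ + β₂) := by
  have e0 := Real.exp_pos (-β₀)
  have key : (Real.exp (-β₁) - 1) * (Real.exp (-β₂) - 1) ≥ 0 := by
    rcases mul_nonneg_iff.mp h with ⟨h1, h2⟩ | ⟨h1, h2⟩
    · have a1 : Real.exp (-β₁) ≤ 1 := Real.exp_le_one_iff.mpr (by linarith)
      have a2 : Real.exp (-β₂) ≤ 1 := Real.exp_le_one_iff.mpr (by linarith)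
      nlinarith
    · have a1 : 1 ≤ Real.exp (-β₁) := Real.one_le_exp (by linarith)
      have a2 : 1 ≤ Real.exp (-β₂) := Real.one_le_exp (by linarith)
      nlinarith
  have E1 : Real.exp (-(β₀ + β₁)) = Real.exp (-β₀) * Real.exp (-β₁) := by
    rw [← Real.exp_add]; ring_nf
  have E2 : Real.exp (-(β₀ + β₂)) = Real.exp (-β₀) * Real.exp (-β₂) := by
    rw [← Real.exp_add]; ring_nf
  have E3 : Real.exp (-(β₀ + β₁ + β₂)) = Real.exp (-β₀) * (Real.exp (-β₁) * Real.exp (-β₂)) := by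
    rw [← Real.exp_add, ← Real.exp_add]; ring_nf
  simp only [expit]
  rw [div_mul_div_comm, div_mul_div_comm, div_le_div_iff₀ (by positivity) (by positivity)]
  rw [E1, E2, E3]
  nlinarith [mul_nonneg e0.le key, Real.exp_pos (-β₁), Real.exp_pos (-β₂)]
end

section
/- Suppose p_{de} = expit(β₀ + β₁ d + β₂ e). If β₁ β₂ ≤ 0 (opposite signs), then p_{11} p_{00} ≥ p_{10} p_{01}, i.e., Inter_RR ≥ 1. -/
/-- logistic no-interaction model with β₁β₂ ≤ 0 implies Inter_RR ≥ 1. -/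
theorem stmt_4 (β₀ β₁ β₂ : ℝ) (h : β₁ * β₂ ≤ 0) :
    expit (β₀ + β₁ + β₂) * expit β₀ ≥ expit (β₀ + β₁) * expit (β₀ + β₂) := by
  have key : (Real.exp (-β₁) - 1) * (Real.exp (-β₂) - 1) ≤ 0 := by
    rcases mul_nonpos_iff.mp h with ⟨h1, h2⟩ | ⟨h1, h2⟩
    · apply mul_nonpos_of_nonpos_of_nonneg
      · simpa using Real.exp_le_exp.mpr (by linarith : -β₁ ≤ 0)
      · simpa using Real.exp_le_exp.mpr (by linarith : (0:ℝ) ≤ -β₂)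
    · apply mul_nonpos_of_nonneg_of_nonpos
      · simpa using Real.exp_le_exp.mpr (by linarith : (0:ℝ) ≤ -β₁)
      · simpa using Real.exp_le_exp.mpr (by linarith : -β₂ ≤ 0)
  unfold expit
  have e0 := Real.exp_pos (-β₀)
  have e1 := Real.exp_pos (-β₁)
  have e2 := Real.exp_pos (-β₂)
  have hA : (0:ℝ) < 1 + Real.exp (-(β₀ + β₁ + β₂)) := by positivity
  have hB : (0:ℝ) < 1 + Real.exp (-β₀) := by positivity
  have hC : (0:ℝ) < 1 + Real.exp (-(β₀ + β₁)) := by positivity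
  have hD : (0:ℝ) < 1 + Real.exp (-(β₀ + β₂)) := by positivity
  rw [div_mul_div_comm, div_mul_div_comm, ge_iff_le, div_le_div_iff₀ (by positivity) (by positivity)]
  have r1 : Real.exp (-(β₀ + β₁ + β₂)) = Real.exp (-β₀) * Real.exp (-β₁) * Real.exp (-β₂) := by
    rw [← Real.exp_add, ← Real.exp_add]; ring_nf
  have r2 : Real.exp (-(β₀ + β₁)) = Real.exp (-β₀) * Real.exp (-β₁) := by
    rw [← Real.exp_add]; ring_nf
  have r3 : Real.exp (-(β₀ + β₂)) = Real.exp (-β₀) * Real.exp (-β₂) := by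
    rw [← Real.exp_add]; ring_nf
  rw [r1, r2, r3]
  nlinarith [mul_nonneg e0.le (neg_nonneg.mpr key)]
end

section
/- Result 2(a) on the odds ratio scale: if p_{de} = P(S=1|D=d,E=e) > 0 satisfy the no-interaction condition on the odds ratio scale, i.e., OR_{ES|D=1} = OR_{ES|D=0} where OR_{ES|D=d} = [p_{d1}/(1-p_{d1})]/[p_{d0}/(1-p_{d0})] (with all p_{de} ∈ (0,1)), and p_{de} is monotone non-decreasing in both d and e (p_{1e} ≥ p_{0e} and p_{d1} ≥ p_{d0} for all d,e), then OR_{ED|S=1} ≤ OR_{ED}. -/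
/-- Result 2(a): no interaction on OR scale and same-direction monotonicity
imply OR_{ED|S=1} ≤ OR_{ED}. -/
theorem stmt_5 (p11 p10 p01 p00 q11 q10 q01 q00 : ℝ)
    (hp11 : p11 ∈ Set.Ioo (0:ℝ) 1) (hp10 : p10 ∈ Set.Ioo (0:ℝ) 1)
    (hp01 : p01 ∈ Set.Ioo (0:ℝ) 1) (hp00 : p00 ∈ Set.Ioo (0:ℝ) 1)
    (hq11 : 0 < q11) (hq10 : 0 < q10) (hq01 : 0 < q01) (hq00 : 0 < q00)
    (hnoint : (p11 / (1 - p11)) / (p10 / (1 - p10)) = (p01 / (1 - p01)) / (p00 / (1 - p00)))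
    (hmond : p10 ≥ p00 ∧ p11 ≥ p01) (hmone : p01 ≥ p00 ∧ p11 ≥ p10) :
    (p11 * q11 * (p00 * q00)) / (p10 * q10 * (p01 * q01)) ≤
      (q11 * q00) / (q10 * q01) := by
  obtain ⟨h11a, h11b⟩ := hp11
  obtain ⟨h10a, h10b⟩ := hp10
  obtain ⟨h01a, h01b⟩ := hp01
  obtain ⟨h00a, h00b⟩ := hp00
  have h11c : (0:ℝ) < 1 - p11 := by linarith
  have h10c : (0:ℝ) < 1 - p10 := by linarith
  have h01c : (0:ℝ) < 1 - p01 := by linarith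
  have h00c : (0:ℝ) < 1 - p00 := by linarith
  -- clear denominators in the no-interaction hypothesis
  have heq : p11 * (1 - p10) * (p00 * (1 - p01)) =
      p01 * (1 - p00) * (p10 * (1 - p11)) := by
    have := hnoint
    field_simp at this
    nlinarith [this]
  -- key inequality: p11 * p00 ≤ p10 * p01
  have hkey : p11 * p00 ≤ p10 * p01 := by
    nlinarith [heq, mul_nonneg (mul_nonneg (sub_nonneg.2 hmone.2) (sub_nonneg.2 hmond.2)) h00a.le,
      mul_pos h10a h01a, mul_pos h11a h00a,
      mul_nonneg (sub_nonneg.2 hmone.1) (sub_nonneg.2 hmond.1),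
      mul_nonneg (mul_nonneg (sub_nonneg.2 hmone.2) (sub_nonneg.2 hmond.2)) h10a.le,
      mul_nonneg (mul_nonneg (sub_nonneg.2 hmone.1) (sub_nonneg.2 hmond.1)) h11a.le,
      mul_nonneg (mul_nonneg (sub_nonneg.2 hmone.1) (sub_nonneg.2 hmond.1)) h01a.le]
  rw [div_le_div_iff₀ (by positivity) (by positivity)]
  nlinarith [mul_pos (mul_pos (mul_pos hq11 hq00) hq10) hq01,
    mul_le_mul_of_nonneg_right hkey
      (le_of_lt (mul_pos (mul_pos (mul_pos hq11 hq00) hq10) hq01))]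
end

section
/- Result 2(b): if the selection probabilities p_{de} ∈ (0,1) satisfy no interaction on the odds ratio scale (OR_{ES|D=1} = OR_{ES|D=0}) and p_{de} has opposite monotonicity in d and e (non-decreasing in d and non-increasing in e, or vice versa), then OR_{ED|S=1} ≥ OR_{ED}. -/
lemma stmt_6_key (a b c d : ℝ) (ha0 : 0 < a) (ha1 : a < 1) (hb0 : 0 < b) (hb1 : b < 1)
    (hc0 : 0 < c) (hc1 : c < 1) (hd0 : 0 < d) (hd1 : d < 1)
    (hca : c ≤ a) (hab : a ≤ b) (hcd : c ≤ d) (hdb : d ≤ b)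
    (heq : a * (1-b) * (d * (1-c)) = c * (1-d) * (b * (1-a))) :
    b * c ≤ a * d := by
  nlinarith [mul_nonneg (sub_nonneg.2 hca) (sub_nonneg.2 hdb),
    mul_nonneg (sub_nonneg.2 hab) (sub_nonneg.2 hcd),
    mul_nonneg (sub_nonneg.2 hca) (sub_nonneg.2 hcd),
    mul_nonneg (sub_nonneg.2 hab) (sub_nonneg.2 hdb),
    mul_pos ha0 hd0, mul_pos hb0 hc0, sq_nonneg (a*d - b*c), sq_nonneg (a+d-b-c)]

/-- Result 2(b): no interaction on OR scale and opposite monotonicity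
imply OR_{ED|S=1} ≥ OR_{ED}. -/
theorem stmt_6 (p11 p10 p01 p00 q11 q10 q01 q00 : ℝ)
    (hp11 : p11 ∈ Set.Ioo (0:ℝ) 1) (hp10 : p10 ∈ Set.Ioo (0:ℝ) 1)
    (hp01 : p01 ∈ Set.Ioo (0:ℝ) 1) (hp00 : p00 ∈ Set.Ioo (0:ℝ) 1)
    (hnoint : (p11 * (1 - p10)) / (p10 * (1 - p11)) = (p01 * (1 - p00)) / (p00 * (1 - p01)))
    (hopp : ((p10 ≥ p00 ∧ p11 ≥ p01) ∧ (p01 ≤ p00 ∧ p11 ≤ p10)) ∨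
            ((p10 ≤ p00 ∧ p11 ≤ p01) ∧ (p01 ≥ p00 ∧ p11 ≥ p10)))
    (hq11 : 0 < q11) (hq10 : 0 < q10) (hq01 : 0 < q01) (hq00 : 0 < q00) :
    (p11 * q11 * (p00 * q00)) / (p10 * q10 * (p01 * q01)) ≥
      (q11 * q00) / (q10 * q01) := by
  obtain ⟨ha0, ha1⟩ := hp11
  obtain ⟨hb0, hb1⟩ := hp10
  obtain ⟨hc0, hc1⟩ := hp01
  obtain ⟨hd0, hd1⟩ := hp00
  have h1 : (0:ℝ) < p10 * (1 - p11) := mul_pos hb0 (by linarith)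
  have h2 : (0:ℝ) < p00 * (1 - p01) := mul_pos hd0 (by linarith)
  have heq : p11 * (1 - p10) * (p00 * (1 - p01)) = p01 * (1 - p00) * (p10 * (1 - p11)) := by
    rw [div_eq_div_iff (ne_of_gt h1) (ne_of_gt h2)] at hnoint
    linarith [hnoint]
  have key : p10 * p01 ≤ p11 * p00 := by
    rcases hopp with ⟨⟨h₁, h₂⟩, h₃, h₄⟩ | ⟨⟨h₁, h₂⟩, h₃, h₄⟩
    · exact stmt_6_key p11 p10 p01 p00 ha0 ha1 hb0 hb1 hc0 hc1 hd0 hd1 h₂ h₄ h₃ h₁ heq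
    · have := stmt_6_key p00 p01 p10 p11 hd0 hd1 hc0 hc1 hb0 hb1 ha0 ha1 h₁ h₃ h₄ h₂
        (by linarith [heq]; )
      linarith [this]
  rw [ge_iff_le, div_le_div_iff₀ (by positivity) (by positivity)]
  nlinarith [mul_pos (mul_pos (mul_pos hq11 hq10) hq01) hq00, key]
end

section
/- Key inequality for Result 2: for real numbers β₀, β₁, β₂ with β₁ ≥ 0 and β₂ ≥ 0, expit(β₀) · expit(β₀+β₁+β₂) ≤ expit(β₀+β₁) · expit(β₀+β₂), where expit(x) = 1/(1+exp(-x)). -/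
/-- key inequality for Result 2. -/
theorem stmt_7 (β₀ β₁ β₂ : ℝ) (h1 : β₁ ≥ 0) (h2 : β₂ ≥ 0) :
    expit β₀ * expit (β₀ + β₁ + β₂) ≤ expit (β₀ + β₁) * expit (β₀ + β₂) := by
  unfold expit
  have ha : 0 < Real.exp (-β₀) := Real.exp_pos _
  have hb : 0 < Real.exp (-β₁) := Real.exp_pos _
  have hc : 0 < Real.exp (-β₂) := Real.exp_pos _
  have hb1 : Real.exp (-β₁) ≤ 1 := Real.exp_le_one_iff.mpr (by linarith)
  have hc1 : Real.exp (-β₂) ≤ 1 := Real.exp_le_one_iff.mpr (by linarith)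
  have e1 : Real.exp (-(β₀ + β₁)) = Real.exp (-β₀) * Real.exp (-β₁) := by
    rw [← Real.exp_add]; ring_nf
  have e2 : Real.exp (-(β₀ + β₂)) = Real.exp (-β₀) * Real.exp (-β₂) := by
    rw [← Real.exp_add]; ring_nf
  have e3 : Real.exp (-(β₀ + β₁ + β₂)) = Real.exp (-β₀) * Real.exp (-β₁) * Real.exp (-β₂) := by
    rw [← Real.exp_add, ← Real.exp_add]; ring_nf
  rw [e1, e2, e3]
  set a := Real.exp (-β₀)
  set b := Real.exp (-β₁)
  set c := Real.exp (-β₂)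
  rw [div_mul_div_comm, div_mul_div_comm, div_le_div_iff₀ (by positivity) (by positivity)]
  nlinarith [mul_pos hb hc, mul_nonneg (mul_pos ha ha).le (mul_nonneg (sub_nonneg.mpr hb1) (sub_nonneg.mpr hc1)), mul_nonneg ha.le (mul_nonneg (sub_nonneg.mpr hb1) (sub_nonneg.mpr hc1))]
end

section
/- Result 3(a) on the risk difference scale: suppose p_{de} = γ₀ + γ₁ d + γ₂ e with γ₀ > 0, γ₀+γ₁ > 0, γ₀+γ₂ > 0, γ₀+γ₁+γ₂ > 0 (an additive no-interaction model). If γ₁ γ₂ ≥ 0 (p_{de} monotone in the same direction in d and e), then Inter_RR = p_{11}p_{00}/(p_{10}p_{01}) ≤ 1, and hence OR_{ED|S=1} ≤ OR_{ED}. -/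
/-- Result 3(a): additive no-interaction model with γ₁γ₂ ≥ 0 implies
Inter_RR ≤ 1 and OR_{ED|S=1} ≤ OR_{ED}. -/
theorem stmt_9 (γ₀ γ₁ γ₂ : ℝ) (h0 : 0 < γ₀) (h1 : 0 < γ₀ + γ₁) (h2 : 0 < γ₀ + γ₂)
    (h3 : 0 < γ₀ + γ₁ + γ₂) (hmon : γ₁ * γ₂ ≥ 0) (OR : ℝ) (hOR : 0 < OR) :
    ((γ₀ + γ₁ + γ₂) * γ₀) / ((γ₀ + γ₁) * (γ₀ + γ₂)) ≤ 1 ∧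
      OR * (((γ₀ + γ₁ + γ₂) * γ₀) / ((γ₀ + γ₁) * (γ₀ + γ₂))) ≤ OR := by
  have hle : ((γ₀ + γ₁ + γ₂) * γ₀) / ((γ₀ + γ₁) * (γ₀ + γ₂)) ≤ 1 := by
    rw [div_le_one (by positivity)]
    nlinarith
  refine ⟨hle, ?_⟩
  nlinarith
end

section
/- Result 4(a), odds ratio scale: suppose p_{de} = expit(β₀ + β₁d + β₂e + β₃de) with β₃ ≤ 0 (non-positive interaction on the odds ratio scale) and β₁ ≥ 0, β₂ ≥ 0 (monotone non-decreasing in both d and e). Then p_{11}p_{00} ≤ p_{10}p_{01}, i.e., Inter_RR ≤ 1, and hence OR_{ED|S=1} ≤ OR_{ED}. -/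
lemma expit_pos (x : ℝ) : 0 < expit x := by
  unfold expit; positivity

/-- Result 4(a), odds ratio scale. -/
theorem stmt_12 (β₀ β₁ β₂ β₃ : ℝ) (h3 : β₃ ≤ 0) (h1 : β₁ ≥ 0) (h2 : β₂ ≥ 0)
    (OR : ℝ) (hOR : 0 < OR) :
    expit (β₀ + β₁ + β₂ + β₃) * expit β₀ ≤ expit (β₀ + β₁) * expit (β₀ + β₂) ∧
      (expit (β₀ + β₁ + β₂ + β₃) * expit β₀) / (expit (β₀ + β₁) * expit (β₀ + β₂)) ≤ 1 ∧
      OR * ((expit (β₀ + β₁ + β₂ + β₃) * expit β₀) / (expit (β₀ + β₁) * expit (β₀ + β₂))) ≤ OR := by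
  have key : expit (β₀ + β₁ + β₂ + β₃) * expit β₀ ≤ expit (β₀ + β₁) * expit (β₀ + β₂) := by
    unfold expit
    rw [div_mul_div_comm, div_mul_div_comm, div_le_div_iff₀ (by positivity) (by positivity)]
    have e1 : Real.exp (-(β₀ + β₁ + β₂ + β₃))
        = Real.exp (-β₀) * Real.exp (-β₁) * Real.exp (-β₂) * Real.exp (-β₃) := by
      rw [← Real.exp_add, ← Real.exp_add, ← Real.exp_add]; ring_nf
    have e2 : Real.exp (-(β₀ + β₁)) = Real.exp (-β₀) * Real.exp (-β₁) := by
      rw [← Real.exp_add]; ring_nf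
    have e3 : Real.exp (-(β₀ + β₂)) = Real.exp (-β₀) * Real.exp (-β₂) := by
      rw [← Real.exp_add]; ring_nf
    rw [e1, e2, e3]
    set a := Real.exp (-β₀) with ha
    set u := Real.exp (-β₁) with hu
    set v := Real.exp (-β₂) with hv
    set w := Real.exp (-β₃) with hw
    have hau : 0 < a := Real.exp_pos _
    have huu : u ≤ 1 := by rw [hu]; exact Real.exp_le_one_iff.mpr (by linarith)
    have hvv : v ≤ 1 := by rw [hv]; exact Real.exp_le_one_iff.mpr (by linarith)
    have hww : 1 ≤ w := by rw [hw]; exact Real.one_le_exp (by linarith)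
    have hup : 0 < u := Real.exp_pos _
    have hvp : 0 < v := Real.exp_pos _
    nlinarith [mul_nonneg (sub_nonneg.mpr huu) (sub_nonneg.mpr hvv),
      mul_pos hup hvp, mul_pos hau hau, sq_nonneg a,
      mul_nonneg (mul_nonneg hup.le hvp.le) (sub_nonneg.mpr hww),
      mul_nonneg (mul_nonneg (mul_nonneg hau.le hup.le) hvp.le) (sub_nonneg.mpr hww),
      mul_nonneg (mul_nonneg (mul_nonneg (mul_nonneg hau.le hau.le) hup.le) hvp.le) (sub_nonneg.mpr hww)]
  have hd : 0 < expit (β₀ + β₁) * expit (β₀ + β₂) :=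
    mul_pos (expit_pos _) (expit_pos _)
  have hq : (expit (β₀ + β₁ + β₂ + β₃) * expit β₀) / (expit (β₀ + β₁) * expit (β₀ + β₂)) ≤ 1 :=
    (div_le_one hd).mpr key
  have hq0 : 0 ≤ (expit (β₀ + β₁ + β₂ + β₃) * expit β₀) / (expit (β₀ + β₁) * expit (β₀ + β₂)) :=
    div_nonneg (mul_pos (expit_pos _) (expit_pos _)).le hd.le
  refine ⟨key, hq, ?_⟩
  nlinarith
end

section
/- Result 4(b), odds ratio scale: suppose p_{de} = expit(β₀ + β₁d + β₂e + β₃de) with β₃ ≥ 0 (non-negative interaction) and β₁β₂ ≤ 0 (opposite monotonicity). Then p_{11}p_{00} ≥ p_{10}p_{01}, i.e., Inter_RR ≥ 1, and hence OR_{ED|S=1} ≥ OR_{ED}. -/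
/-- Result 4(b), odds ratio scale. -/
theorem stmt_13 (β₀ β₁ β₂ β₃ : ℝ) (h3 : β₃ ≥ 0) (h12 : β₁ * β₂ ≤ 0)
    (OR : ℝ) (hOR : 0 < OR) :
    expit (β₀ + β₁ + β₂ + β₃) * expit β₀ ≥ expit (β₀ + β₁) * expit (β₀ + β₂) ∧
      (expit (β₀ + β₁ + β₂ + β₃) * expit β₀) / (expit (β₀ + β₁) * expit (β₀ + β₂)) ≥ 1 ∧
      OR * ((expit (β₀ + β₁ + β₂ + β₃) * expit β₀) / (expit (β₀ + β₁) * expit (β₀ + β₂))) ≥ OR := by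
  have hA : (0:ℝ) < Real.exp (-β₀) := Real.exp_pos _
  have hB : (0:ℝ) < Real.exp (-β₁) := Real.exp_pos _
  have hC : (0:ℝ) < Real.exp (-β₂) := Real.exp_pos _
  have hD : (0:ℝ) < Real.exp (-β₃) := Real.exp_pos _
  set A := Real.exp (-β₀)
  set B := Real.exp (-β₁)
  set C := Real.exp (-β₂)
  set D := Real.exp (-β₃)
  have hD1 : D ≤ 1 := by
    have h := Real.exp_le_exp.mpr (show -β₃ ≤ 0 by linarith)
    rwa [Real.exp_zero] at h
  have hBC : (1 - B) * (1 - C) ≤ 0 := by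
    rcases mul_nonpos_iff.mp h12 with ⟨h1, h2⟩ | ⟨h1, h2⟩
    · have hb : B ≤ 1 := by
        have := Real.exp_le_exp.mpr (show -β₁ ≤ 0 by linarith)
        rwa [Real.exp_zero] at this
      have hc : 1 ≤ C := by
        have := Real.exp_le_exp.mpr (show (0:ℝ) ≤ -β₂ by linarith)
        rwa [Real.exp_zero] at this
      nlinarith
    · have hb : 1 ≤ B := by
        have := Real.exp_le_exp.mpr (show (0:ℝ) ≤ -β₁ by linarith)
        rwa [Real.exp_zero] at this
      have hc : C ≤ 1 := by
        have := Real.exp_le_exp.mpr (show -β₂ ≤ 0 by linarith)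
        rwa [Real.exp_zero] at this
      nlinarith
  have e1 : Real.exp (-(β₀ + β₁ + β₂ + β₃)) = A * B * C * D := by
    simp only [A, B, C, D, ← Real.exp_add]; ring_nf
  have e2 : Real.exp (-(β₀ + β₁)) = A * B := by
    simp only [A, B, ← Real.exp_add]; ring_nf
  have e3 : Real.exp (-(β₀ + β₂)) = A * C := by
    simp only [A, C, ← Real.exp_add]; ring_nf
  have key : (1 + A * B * C * D) * (1 + A) ≤ (1 + A * B) * (1 + A * C) := by
    nlinarith [mul_nonpos_of_nonneg_of_nonpos hA.le hBC,
      mul_nonneg (mul_nonneg hA.le (mul_pos hB hC).le) (sub_nonneg.mpr hD1),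
      mul_nonneg (mul_nonneg (mul_pos hA hA).le (mul_pos hB hC).le) (sub_nonneg.mpr hD1)]
  have hP : (0:ℝ) < (1 + A * B * C * D) * (1 + A) := by positivity
  have hQ : (0:ℝ) < (1 + A * B) * (1 + A * C) := by positivity
  have main : expit (β₀ + β₁ + β₂ + β₃) * expit β₀ ≥ expit (β₀ + β₁) * expit (β₀ + β₂) := by
    unfold expit
    rw [e1, e2, e3, div_mul_div_comm, div_mul_div_comm, one_mul]
    exact one_div_le_one_div_of_le hP key
  have h1 : (1:ℝ) ≤ (expit (β₀ + β₁ + β₂ + β₃) * expit β₀) /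
      (expit (β₀ + β₁) * expit (β₀ + β₂)) := by
    rw [le_div_iff₀ (mul_pos (expit_pos _) (expit_pos _)), one_mul]
    exact main
  exact ⟨main, h1, le_mul_of_one_le_right hOR.le h1⟩
end

section
/- Result 4(a), risk difference scale: suppose p_{de} = γ₀ + γ₁d + γ₂e + γ₃de with all four values positive, γ₀ ≥ 0, γ₃ ≤ 0 (non-positive additive interaction), and γ₁γ₂ ≥ 0. Then Inter_RR = γ₀(γ₀+γ₁+γ₂+γ₃)/[(γ₀+γ₁)(γ₀+γ₂)] ≤ 1, hence OR_{ED|S=1} ≤ OR_{ED}. -/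
/-- Result 4(a), risk difference scale. -/
theorem stmt_14 (γ₀ γ₁ γ₂ γ₃ : ℝ) (h00 : 0 < γ₀) (h10 : 0 < γ₀ + γ₁)
    (h01 : 0 < γ₀ + γ₂) (h11 : 0 < γ₀ + γ₁ + γ₂ + γ₃)
    (hγ0 : γ₀ ≥ 0) (hγ3 : γ₃ ≤ 0) (hmon : γ₁ * γ₂ ≥ 0)
    (OR : ℝ) (hOR : 0 < OR) :
    γ₀ * (γ₀ + γ₁ + γ₂ + γ₃) / ((γ₀ + γ₁) * (γ₀ + γ₂)) ≤ 1 ∧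
      OR * (γ₀ * (γ₀ + γ₁ + γ₂ + γ₃) / ((γ₀ + γ₁) * (γ₀ + γ₂))) ≤ OR := by
  have h1 : γ₀ * (γ₀ + γ₁ + γ₂ + γ₃) / ((γ₀ + γ₁) * (γ₀ + γ₂)) ≤ 1 := by
    rw [div_le_one (by positivity)]
    nlinarith [mul_nonpos_of_nonneg_of_nonpos hγ0 hγ3]
  exact ⟨h1, by nlinarith⟩
end

section
/- Result 4(b), risk difference scale: suppose p_{de} = γ₀ + γ₁d + γ₂e + γ₃de with all four values positive, γ₀ ≥ 0, γ₃ ≥ 0, and γ₁γ₂ ≤ 0. Then Inter_RR ≥ 1 and OR_{ED|S=1} ≥ OR_{ED}. -/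
/-- Result 4(b), risk difference scale. -/
theorem stmt_15 (γ₀ γ₁ γ₂ γ₃ : ℝ) (h00 : 0 < γ₀) (h10 : 0 < γ₀ + γ₁)
    (h01 : 0 < γ₀ + γ₂) (h11 : 0 < γ₀ + γ₁ + γ₂ + γ₃)
    (hγ0 : γ₀ ≥ 0) (hγ3 : γ₃ ≥ 0) (hmon : γ₁ * γ₂ ≤ 0)
    (OR : ℝ) (hOR : 0 < OR) :
    γ₀ * (γ₀ + γ₁ + γ₂ + γ₃) / ((γ₀ + γ₁) * (γ₀ + γ₂)) ≥ 1 ∧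
      OR * (γ₀ * (γ₀ + γ₁ + γ₂ + γ₃) / ((γ₀ + γ₁) * (γ₀ + γ₂))) ≥ OR := by
  have hpos : 0 < (γ₀ + γ₁) * (γ₀ + γ₂) := mul_pos h10 h01
  have key : γ₀ * (γ₀ + γ₁ + γ₂ + γ₃) / ((γ₀ + γ₁) * (γ₀ + γ₂)) ≥ 1 := by
    rw [ge_iff_le, le_div_iff₀ hpos, one_mul]
    nlinarith [mul_nonneg hγ0 hγ3]
  exact ⟨key, by nlinarith⟩
end

section
/- Result 4, risk ratio scale: if the multiplicative interaction is non-positive, i.e., p_{11}p_{00} ≤ p_{10}p_{01} with all p_{de} > 0, then OR_{ED|S=1} ≤ OR_{ED}; symmetrically, if p_{11}p_{00} ≥ p_{10}p_{01}, then OR_{ED|S=1} ≥ OR_{ED}. -/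
/-- Result 4, risk ratio scale. -/
theorem stmt_16 (p11 p10 p01 p00 q11 q10 q01 q00 : ℝ)
    (hp11 : 0 < p11) (hp10 : 0 < p10) (hp01 : 0 < p01) (hp00 : 0 < p00)
    (hq11 : 0 < q11) (hq10 : 0 < q10) (hq01 : 0 < q01) (hq00 : 0 < q00) :
    (p11 * p00 ≤ p10 * p01 →
      (p11 * q11 * (p00 * q00)) / (p10 * q10 * (p01 * q01)) ≤ (q11 * q00) / (q10 * q01)) ∧
    (p11 * p00 ≥ p10 * p01 →
      (p11 * q11 * (p00 * q00)) / (p10 * q10 * (p01 * q01)) ≥ (q11 * q00) / (q10 * q01)) := by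
  constructor <;> intro h <;> (try rw [ge_iff_le]) <;>
    rw [div_le_div_iff₀ (by positivity) (by positivity)] <;>
    nlinarith [mul_pos hq11 hq00, mul_pos hq10 hq01,
      mul_pos (mul_pos hq11 hq00) (mul_pos hq10 hq01), mul_pos hp10 hp01, mul_pos hp11 hp00]
end
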